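/- arXiv:1806.00569 — 5 statements merged into one kernel-verified Lean document; each statement's English description precedes it below -/
import Mathlib

section
/- Abstract form of Theorem 1(i) (consistency of the garrote parameters for the relevant variables). Let 1 ≤ s ≤ d and ξ* := (1,…,1,0,…,0) ∈ [0,1]^d with its first s coordinates equal to 1 and the remaining d−s coordinates equal to 0. Let M : [0,1]^d → ℝ satisfy: (independence) M(ξ) depends only on the first s coordinates of ξ, i.e. M(ξ₁,ξ₀) = M(ξ₁,0) for all ξ₁ ∈ [0,1]^s and ξ₀ ∈ [0,1]^{d−s}; (well-separation) for every ε > 0, M(ξ*) < inf{ M(ξ₁,0) : ξ₁ ∈ [0,1]^s, ‖ξ₁ − (1,…,1)‖ ≥ ε }. Let (η_n) be nonnegative reals with η_n → 0. On a probability space (Ω,P), let M_n : Ω × [0,1]^d → ℝ be random functions such that the random variables sup_{ξ∈[0,1]^d} |M_n(ω,ξ) − M(ξ)| converge to 0 in probability, and let ξ̂_n : Ω → [0,1]^d be measurable maps such that for every ω, ξ̂_n(ω) minimizes ξ ↦ M_n(ω,ξ) + η_n·∑_{i=1}^d ξ_i over [0,1]^d. Then the vector of the first s coordinates of ξ̂_n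 converges in probability to (1,…,1) ∈ ℝ^s, i.e., for every ε > 0, P( ‖(first s coordinates of ξ̂_n) − (1,…,1)‖ ≥ ε ) → 0 as n → ∞. -/
/-!
Let `γ > 0` be the separation gap of `M` at radius `ε`. Once `η_n d < γ/4`, on the event that
`M_n` is uniformly `γ/4`-close to `M`, comparing the penalized objective at `ξ̂_n` and at `ξ*`
gives `M ξ̂_n < M ξ* + 3γ/4`. Since `M` ignores the irrelevant coordinates, the truncation of
`ξ̂_n` has the same value, so by well-separation it is `ε`-close to `(1,…,1)` in the first `s`
coordinates, as is `ξ̂_n`. The bad event is therefore contained in the deviation event, whose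
probability tends to `0`.
-/

open MeasureTheory Filter Topology

lemma EReal.exists_pos_add_le_of_coe_lt_biInf {α : Type*} {S : Set α} {f : α → ℝ} {a : ℝ}
    (h : (a : EReal) < ⨅ x ∈ S, (f x : EReal)) : ∃ γ > 0, ∀ x ∈ S, a + γ ≤ f x := by
  obtain ⟨c, hac, hc⟩ := EReal.lt_iff_exists_real_btwn.mp h
  refine ⟨c - a, by simpa using EReal.coe_lt_coe_iff.mp hac, fun x hx => ?_⟩
  have hcx : (c : EReal) ≤ f x := hc.le.trans (iInf₂_le x hx)
  linarith [EReal.coe_le_coe_iff.mp hcx]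

lemma MeasureTheory.tendsto_measure_zero_of_eventually_subset {Ω ι : Type*} [MeasurableSpace Ω]
    {μ : Measure Ω} {l : Filter ι} {A B : ι → Set Ω}
    (hB : Tendsto (fun n => μ (B n)) l (𝓝 0)) (hAB : ∀ᶠ n in l, A n ⊆ B n) :
    Tendsto (fun n => μ (A n)) l (𝓝 0) :=
  tendsto_of_tendsto_of_tendsto_of_le_of_le' tendsto_const_nhds hB
    (Eventually.of_forall fun _ => zero_le) (hAB.mono fun _ h => measure_mono h)

section UnitCube

variable {d : ℕ}

lemma sum_mem_Icc_of_forall_mem_Icc {ξ : Fin d → ℝ} (hξ : ∀ i, ξ i ∈ Set.Icc (0 : ℝ) 1) :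
    ∑ i, ξ i ∈ Set.Icc (0 : ℝ) d := by
  refine ⟨Finset.sum_nonneg fun i _ => (hξ i).1, ?_⟩
  calc ∑ i, ξ i ≤ ∑ _i : Fin d, (1 : ℝ) := Finset.sum_le_sum fun i _ => (hξ i).2
    _ = d := by simp

def zeroTail (s : ℕ) (ξ : Fin d → ℝ) : Fin d → ℝ := fun i => if (i : ℕ) < s then ξ i else 0

lemma zeroTail_mem_Icc {s : ℕ} {ξ : Fin d → ℝ} (hξ : ∀ i, ξ i ∈ Set.Icc (0 : ℝ) 1) (i : Fin d) :
    zeroTail s ξ i ∈ Set.Icc (0 : ℝ) 1 := by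
  unfold zeroTail
  split_ifs
  exacts [hξ i, ⟨le_rfl, zero_le_one⟩]

lemma zeroTail_of_le {s : ℕ} (ξ : Fin d → ℝ) {i : Fin d} (hi : s ≤ (i : ℕ)) :
    zeroTail s ξ i = 0 :=
  if_neg (Nat.not_lt.mpr hi)

lemma sum_filter_lt_zeroTail (s : ℕ) (ξ : Fin d → ℝ) (g : ℝ → ℝ) :
    ∑ i ∈ Finset.univ.filter (fun i : Fin d => (i : ℕ) < s), g (zeroTail s ξ i) =
      ∑ i ∈ Finset.univ.filter (fun i : Fin d => (i : ℕ) < s), g (ξ i) :=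
  Finset.sum_congr rfl fun i hi => by rw [zeroTail, if_pos (Finset.mem_filter.mp hi).2]

lemma relevant_dist_lt_of_abs_sub_lt {s : ℕ} {M F : (Fin d → ℝ) → ℝ} {η γ ε : ℝ}
    (hindep : ∀ ξ : Fin d → ℝ, (∀ i, ξ i ∈ Set.Icc (0 : ℝ) 1) → M ξ = M (zeroTail s ξ))
    (hgap : ∀ ξ₁ : Fin d → ℝ, (∀ i, ξ₁ i ∈ Set.Icc (0 : ℝ) 1) →
      (∀ i : Fin d, s ≤ (i : ℕ) → ξ₁ i = 0) →
      ε ≤ Real.sqrt (∑ i ∈ Finset.univ.filter fun i : Fin d => (i : ℕ) < s, (ξ₁ i - 1) ^ 2) →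
      M (zeroTail s fun _ => 1) + γ ≤ M ξ₁)
    (hη : 0 ≤ η) (hηd : η * d < γ / 4)
    (hF : ∀ ξ : Fin d → ℝ, (∀ i, ξ i ∈ Set.Icc (0 : ℝ) 1) → |F ξ - M ξ| < γ / 4)
    {x : Fin d → ℝ} (hx : ∀ i, x i ∈ Set.Icc (0 : ℝ) 1)
    (hmin : F x + η * ∑ i, x i ≤
      F (zeroTail s fun _ => 1) + η * ∑ i : Fin d, zeroTail s (fun _ => 1) i) :
    Real.sqrt (∑ i ∈ Finset.univ.filter fun i : Fin d => (i : ℕ) < s, (x i - 1) ^ 2) < ε := by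
  by_contra! hfar
  have hstar : ∀ i : Fin d, zeroTail s (fun _ => 1) i ∈ Set.Icc (0 : ℝ) 1 :=
    zeroTail_mem_Icc fun _ => ⟨zero_le_one, le_rfl⟩
  have hM : M (zeroTail s fun _ => 1) + γ ≤ M x := by
    rw [hindep x hx]
    refine hgap _ (zeroTail_mem_Icc hx) (fun i hi => zeroTail_of_le x hi) ?_
    rwa [sum_filter_lt_zeroTail s x fun t => (t - 1) ^ 2]
  have hpen₁ := mul_le_mul_of_nonneg_left (sum_mem_Icc_of_forall_mem_Icc hstar).2 hη
  have hpen₂ := mul_nonneg hη (sum_mem_Icc_of_forall_mem_Icc hx).1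
  have hFx := abs_lt.mp (hF x hx)
  have hFstar := abs_lt.mp (hF _ hstar)
  linarith [hFx.1, hFstar.2]

end UnitCube

theorem garrote_relevant_consistency_general
    (d s : ℕ)
    (M : (Fin d → ℝ) → ℝ)
    (hindep : ∀ ξ : Fin d → ℝ, (∀ i, ξ i ∈ Set.Icc (0:ℝ) 1) →
      M ξ = M fun i => if (i : ℕ) < s then ξ i else 0)
    (hsep : ∀ ε : ℝ, 0 < ε →
      ((M fun i : Fin d => if (i : ℕ) < s then (1:ℝ) else 0) : EReal) <
        ⨅ ξ₁ ∈ {ξ₁ : Fin d → ℝ |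
            (∀ i, ξ₁ i ∈ Set.Icc (0:ℝ) 1) ∧ (∀ i : Fin d, s ≤ (i : ℕ) → ξ₁ i = 0) ∧
            ε ≤ Real.sqrt (∑ i ∈ Finset.univ.filter fun i : Fin d => (i : ℕ) < s,
                  (ξ₁ i - 1) ^ 2)},
          ((M ξ₁ : ℝ) : EReal))
    (Ω : Type*) [MeasurableSpace Ω] (P : Measure Ω)
    (Mn : ℕ → Ω → (Fin d → ℝ) → ℝ)
    (hMconv : ∀ ε : ℝ, 0 < ε →
      Tendsto (fun n => P {ω | ∃ ξ : Fin d → ℝ, (∀ i, ξ i ∈ Set.Icc (0:ℝ) 1) ∧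
        ε ≤ |Mn n ω ξ - M ξ|}) atTop (𝓝 0))
    (η : ℕ → ℝ) (hη0 : ∀ n, 0 ≤ η n) (hη : Tendsto η atTop (𝓝 0))
    (ξhat : ℕ → Ω → Fin d → ℝ)
    (hbox : ∀ n ω i, ξhat n ω i ∈ Set.Icc (0:ℝ) 1)
    (hmin : ∀ n ω, ∀ ξ : Fin d → ℝ, (∀ i, ξ i ∈ Set.Icc (0:ℝ) 1) →
      Mn n ω (ξhat n ω) + η n * ∑ i, ξhat n ω i ≤ Mn n ω ξ + η n * ∑ i, ξ i) :
    ∀ ε : ℝ, 0 < ε →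
      Tendsto (fun n => P {ω |
          ε ≤ Real.sqrt (∑ i ∈ Finset.univ.filter fun i : Fin d => (i : ℕ) < s,
                (ξhat n ω i - 1) ^ 2)})
        atTop (𝓝 0) := by
  intro ε hε
  obtain ⟨γ, hγ, hgap⟩ := EReal.exists_pos_add_le_of_coe_lt_biInf (hsep ε hε)
  have hηd : ∀ᶠ n in atTop, η n * d < γ / 4 := by
    have hηd₀ : Tendsto (fun n => η n * d) atTop (𝓝 0) := by simpa using hη.mul_const (d : ℝ)
    exact hηd₀.eventually_lt_const (by positivity)
  refine tendsto_measure_zero_of_eventually_subset (hMconv (γ / 4) (by positivity)) ?_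
  filter_upwards [hηd] with n hn ω hfar
  by_contra hclose
  simp only [Set.mem_ofPred_eq, not_exists, not_and, not_le] at hclose
  exact (relevant_dist_lt_of_abs_sub_lt hindep (fun ξ₁ h₁ h₂ h₃ => hgap ξ₁ ⟨h₁, h₂, h₃⟩)
    (hη0 n) hn hclose (hbox n ω)
    (hmin n ω _ (zeroTail_mem_Icc fun _ => ⟨zero_le_one, le_rfl⟩))).not_ge hfar

/-- Abstract form of Theorem 1(i): consistency of the garrote parameters for the
relevant variables. The target function depends only on the first `s` variables,
`M` is the (population) loss with well-separated minimizer
`ξ* = (1,…,1,0,…,0)`, `M_n` are random empirical losses converging uniformly to `M`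
in probability, `ξ̂_n` minimizes the `ℓ¹`-penalized empirical loss with penalty level
`η_n → 0`; then the first `s` coordinates of `ξ̂_n` converge in probability to
`(1,…,1)`. -/
theorem garrote_relevant_consistency
    (d s : ℕ) (hs1 : 1 ≤ s) (hsd : s ≤ d)
    (M : (Fin d → ℝ) → ℝ)
    (hindep : ∀ ξ : Fin d → ℝ, (∀ i, ξ i ∈ Set.Icc (0:ℝ) 1) →
      M ξ = M fun i => if (i : ℕ) < s then ξ i else 0)
    (hsep : ∀ ε : ℝ, 0 < ε →
      ((M fun i : Fin d => if (i : ℕ) < s then (1:ℝ) else 0) : EReal) <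
        ⨅ ξ₁ ∈ {ξ₁ : Fin d → ℝ |
            (∀ i, ξ₁ i ∈ Set.Icc (0:ℝ) 1) ∧ (∀ i : Fin d, s ≤ (i : ℕ) → ξ₁ i = 0) ∧
            ε ≤ Real.sqrt (∑ i ∈ Finset.univ.filter fun i : Fin d => (i : ℕ) < s,
                  (ξ₁ i - 1) ^ 2)},
          ((M ξ₁ : ℝ) : EReal))
    (Ω : Type*) [MeasurableSpace Ω] (P : Measure Ω) [IsProbabilityMeasure P]
    (Mn : ℕ → Ω → (Fin d → ℝ) → ℝ)
    (hMconv : ∀ ε : ℝ, 0 < ε →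
      Tendsto (fun n => P {ω | ∃ ξ : Fin d → ℝ, (∀ i, ξ i ∈ Set.Icc (0:ℝ) 1) ∧
        ε ≤ |Mn n ω ξ - M ξ|}) atTop (𝓝 0))
    (η : ℕ → ℝ) (hη0 : ∀ n, 0 ≤ η n) (hη : Tendsto η atTop (𝓝 0))
    (ξhat : ℕ → Ω → Fin d → ℝ) (hmeas : ∀ n, Measurable (ξhat n))
    (hbox : ∀ n ω i, ξhat n ω i ∈ Set.Icc (0:ℝ) 1)
    (hmin : ∀ n ω, ∀ ξ : Fin d → ℝ, (∀ i, ξ i ∈ Set.Icc (0:ℝ) 1) →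
      Mn n ω (ξhat n ω) + η n * ∑ i, ξhat n ω i ≤ Mn n ω ξ + η n * ∑ i, ξ i) :
    ∀ ε : ℝ, 0 < ε →
      Tendsto (fun n => P {ω |
          ε ≤ Real.sqrt (∑ i ∈ Finset.univ.filter fun i : Fin d => (i : ℕ) < s,
                (ξhat n ω i - 1) ^ 2)})
        atTop (𝓝 0) :=
  garrote_relevant_consistency_general d s M hindep hsep Ω P Mn hMconv η hη0 hη ξhat hbox hmin
end

section
/- Abstract form of Theorem 1(ii) (exact exclusion of the irrelevant variables). Let 1 ≤ s ≤ d and let (η_n) be strictly positive reals. On a probability space (Ω,P), let M_n : Ω × [0,1]^d → ℝ be random functions that for every ω are differentiable in ξ on [0,1]^d (one-sided derivatives at the boundary), with gradient ∇_ξ M_n. Let ξ̂_n : Ω → [0,1]^d be measurable maps satisfying, for every ω, the first-order local optimality condition ( ∇_ξ M_n(ω, ξ̂_n(ω)) + η_n·(1,…,1) )ᵀ ( c − ξ̂_n(ω) ) ≥ 0 for all c ∈ [0,1]^d. Assume that the random variables D_n := max_{s < i ≤ d} sup_{ξ ∈ [0,1]^d} |∂M_n/∂ξ_i (ω, ξ)|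 satisfy D_n/η_n → 0 in probability. Then P( the i-th coordinate of ξ̂_n equals 0 for every i with s < i ≤ d ) → 1 as n → ∞. -/
open MeasureTheory Filter Topology

/-! On the event that every irrelevant partial derivative stays below `η_n` in absolute value,
the coefficients `∂M_n/∂ξ_i + η_n` of the irrelevant coordinates in the first-order condition are
positive. Testing the condition against the point obtained from `ξ̂_n` by zeroing those
coordinates then forces them to vanish, and by hypothesis that event has probability
tending to one. -/

lemma eq_zero_of_forall_le_sum_mul_sub {ι : Type*} [Fintype ι] {a x : ι → ℝ} {S : Set ι}
    (hx : ∀ i, x i ∈ Set.Icc (0 : ℝ) 1) (ha : ∀ i ∈ S, 0 < a i)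
    (hopt : ∀ c : ι → ℝ, (∀ i, c i ∈ Set.Icc (0 : ℝ) 1) → 0 ≤ ∑ i, a i * (c i - x i)) :
    ∀ i ∈ S, x i = 0 := by
  classical
  set c : ι → ℝ := fun j => if j ∈ S then 0 else x j
  have hc : ∀ j, c j ∈ Set.Icc (0 : ℝ) 1 := fun j => by
    by_cases hj : j ∈ S <;> simp [c, hj, hx j]
  have hterm : ∀ j ∈ Finset.univ, a j * (c j - x j) ≤ 0 := fun j _ => by
    by_cases hj : j ∈ S
    · simpa [c, hj] using mul_nonneg (ha j hj).le (hx j).1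
    · simp [c, hj]
  have hsum : ∑ j, a j * (c j - x j) = 0 := le_antisymm (Finset.sum_nonpos hterm) (hopt c hc)
  intro i hi
  have hzero := (Finset.sum_eq_zero_iff_of_nonpos hterm).mp hsum i (Finset.mem_univ i)
  simpa [c, hi, (ha i hi).ne'] using hzero

lemma tendsto_measure_one_of_compl_subset {α β : Type*} [MeasurableSpace α] {P : Measure α}
    [IsProbabilityMeasure P] {l : Filter β} {A B : β → Set α}
    (hA : Tendsto (fun n => P (A n)) l (𝓝 0)) (hAB : ∀ n, (A n)ᶜ ⊆ B n) :
    Tendsto (fun n => P (B n)) l (𝓝 1) := by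
  have hlower : ∀ n, 1 - P (A n) ≤ P (B n) := fun n => by
    rw [tsub_le_iff_left, ← measure_univ (μ := P)]
    calc P Set.univ ≤ P (A n) + P (A n)ᶜ := measure_univ_le_add_compl (A n)
      _ ≤ P (A n) + P (B n) := by gcongr; exact hAB n
  have hlim : Tendsto (fun n => 1 - P (A n)) l (𝓝 1) := by
    simpa using ENNReal.Tendsto.sub tendsto_const_nhds hA (Or.inl ENNReal.one_ne_top)
  exact tendsto_of_tendsto_of_tendsto_of_le_of_le hlim tendsto_const_nhds hlower
    fun _ => prob_le_one

theorem garrote_irrelevant_exclusion_general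
    (d s : ℕ)
    (Ω : Type*) [MeasurableSpace Ω] (P : Measure Ω) [IsProbabilityMeasure P]
    (η : ℕ → ℝ)
    (G : ℕ → Ω → (Fin d → ℝ) → (Fin d → ℝ))
    (ξhat : ℕ → Ω → Fin d → ℝ)
    (hbox : ∀ n ω i, ξhat n ω i ∈ Set.Icc (0:ℝ) 1)
    (hopt : ∀ n ω, ∀ c : Fin d → ℝ, (∀ i, c i ∈ Set.Icc (0:ℝ) 1) →
      0 ≤ ∑ i, (G n ω (ξhat n ω) i + η n) * (c i - ξhat n ω i))
    (hD : ∀ ε : ℝ, 0 < ε →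
      Tendsto (fun n => P {ω | ∃ i : Fin d, s ≤ (i : ℕ) ∧ ∃ ξ : Fin d → ℝ,
        (∀ j, ξ j ∈ Set.Icc (0:ℝ) 1) ∧ ε * η n ≤ |G n ω ξ i|}) atTop (𝓝 0)) :
    Tendsto (fun n => P {ω | ∀ i : Fin d, s ≤ (i : ℕ) → ξhat n ω i = 0})
      atTop (𝓝 1) := by
  refine tendsto_measure_one_of_compl_subset (hD 1 one_pos) fun n ω hω => ?_
  have hsmall : ∀ i : Fin d, s ≤ (i : ℕ) → |G n ω (ξhat n ω) i| < η n := fun i hi =>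
    lt_of_not_ge fun h => hω ⟨i, hi, _, hbox n ω, (one_mul (η n)).symm ▸ h⟩
  exact eq_zero_of_forall_le_sum_mul_sub (S := {i : Fin d | s ≤ (i : ℕ)}) (hbox n ω)
    (fun i hi => by linarith [neg_abs_le (G n ω (ξhat n ω) i), hsmall i hi]) (hopt n ω)

/-- Abstract form of Theorem 1(ii): exact exclusion of the irrelevant variables.
`M_n` are random differentiable empirical losses on `[0,1]^d` with gradients `G n ω`,
`ξ̂_n ∈ [0,1]^d` satisfies the first-order optimality condition of the `ℓ¹`-penalized
problem with penalty `η_n > 0`, and the maximum over the irrelevant coordinates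
`i > s` of the uniform norms of `∂M_n/∂ξ_i` is `o_P(η_n)`; then, with probability
tending to one, all irrelevant coordinates of `ξ̂_n` are exactly zero. -/
theorem garrote_irrelevant_exclusion
    (d s : ℕ) (hs1 : 1 ≤ s) (hsd : s ≤ d)
    (Ω : Type*) [MeasurableSpace Ω] (P : Measure Ω) [IsProbabilityMeasure P]
    (η : ℕ → ℝ) (hη : ∀ n, 0 < η n)
    (Mn : ℕ → Ω → (Fin d → ℝ) → ℝ)
    (G : ℕ → Ω → (Fin d → ℝ) → (Fin d → ℝ))
    (hdiff : ∀ n ω, ∀ ξ : Fin d → ℝ, (∀ i, ξ i ∈ Set.Icc (0:ℝ) 1) →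
      HasFDerivWithinAt (Mn n ω)
        (∑ i, G n ω ξ i • (ContinuousLinearMap.proj i : (Fin d → ℝ) →L[ℝ] ℝ))
        {ζ : Fin d → ℝ | ∀ i, ζ i ∈ Set.Icc (0:ℝ) 1} ξ)
    (ξhat : ℕ → Ω → Fin d → ℝ) (hmeas : ∀ n, Measurable (ξhat n))
    (hbox : ∀ n ω i, ξhat n ω i ∈ Set.Icc (0:ℝ) 1)
    (hopt : ∀ n ω, ∀ c : Fin d → ℝ, (∀ i, c i ∈ Set.Icc (0:ℝ) 1) →
      0 ≤ ∑ i, (G n ω (ξhat n ω) i + η n) * (c i - ξhat n ω i))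
    (hD : ∀ ε : ℝ, 0 < ε →
      Tendsto (fun n => P {ω | ∃ i : Fin d, s ≤ (i : ℕ) ∧ ∃ ξ : Fin d → ℝ,
        (∀ j, ξ j ∈ Set.Icc (0:ℝ) 1) ∧ ε * η n ≤ |G n ω ξ i|}) atTop (𝓝 0)) :
    Tendsto (fun n => P {ω | ∀ i : Fin d, s ≤ (i : ℕ) → ξhat n ω i = 0})
      atTop (𝓝 1) :=
  garrote_irrelevant_exclusion_general d s Ω P η G ξhat hbox hopt hD
end

section
/- Deterministic core of Lemma 4(i). Let Z ⊆ (−1,1)^d be a nonempty set satisfying the contraction condition ξ∘z ∈ Z for all z ∈ Z and ξ ∈ [0,1]^d, and write ‖f_c‖_∞ := sup_{z∈Z} |f_c(z)|. Let κ > 0 satisfy, for every z ∈ Z: ∑_α w α · z^{2α}/(α!)² ≤ κ² and, for each i ∈ Fin d, ∑_α w α · ( (α i) · z^{α − e_i} )² / (α!)² ≤ κ², where e_i is the i-th unit multi-index and terms with α i = 0 are read as 0. Let Ĉ be a linear map from H to H and ĝ ∈ H, and let β > 0 be such that |⟨c, Ĉ c'⟩| ≤ β‖f_c‖_∞‖f_{c'}‖_∞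 and |⟨c, ĝ⟩| ≤ β‖f_c‖_∞ for all c, c' ∈ H. For ξ ∈ (0,1)^d, i ∈ Fin d and c ∈ H, set D̂_i(ξ; c) := ½⟨D_i(ξ)c, Ĉ(S_ξ c)⟩ + ½⟨S_ξ c, Ĉ(D_i(ξ)c)⟩ − ⟨ĝ, D_i(ξ)c⟩. Then for all f̂, f* ∈ H and every i ∈ Fin d: sup_{ξ∈(0,1)^d} |D̂_i(ξ; f̂) − D̂_i(ξ; f*)| ≤ ( κ²β(‖f̂‖ + ‖f*‖) + κβ )·‖f̂ − f*‖. -/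
open MeasureTheory Filter Topology

noncomputable section

/-- Factorial `α!` of a multi-index `α : Fin d → ℕ`. -/
def mfact {d : ℕ} (α : Fin d → ℕ) : ℝ := ∏ i, (Nat.factorial (α i) : ℝ)

/-- Membership in the native space `H` of the power series kernel with weights `w`:
the coefficients vanish where the weights do, and the weighted square sum is finite. -/
def memH {d : ℕ} (w : (Fin d → ℕ) → ℝ) (c : (Fin d → ℕ) → ℝ) : Prop :=
  (∀ α, w α = 0 → c α = 0) ∧
    Summable (fun α : Fin d → ℕ => mfact α ^ 2 * c α ^ 2 / w α)

/-- Inner product `⟨c, c'⟩` on the native space (terms with `w α = 0` vanish since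
division by zero is zero). -/
def innerH {d : ℕ} (w : (Fin d → ℕ) → ℝ) (c c' : (Fin d → ℕ) → ℝ) : ℝ :=
  ∑' α : Fin d → ℕ, mfact α ^ 2 * c α * c' α / w α

/-- Norm on the native space. -/
def normH {d : ℕ} (w : (Fin d → ℕ) → ℝ) (c : (Fin d → ℕ) → ℝ) : ℝ :=
  Real.sqrt (innerH w c c)

/-- The scaling operator `S_ξ`, `(S_ξ c) α = ξ^α · c α`. -/
def Sscale {d : ℕ} (ξ : Fin d → ℝ) (c : (Fin d → ℕ) → ℝ) : (Fin d → ℕ) → ℝ :=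
  fun α => (∏ i, ξ i ^ α i) * c α

/-- The scaling-derivative sequence `D_i(ξ) c`,
`(D_i(ξ)c) α = (α i)·(ξ i)^(α i − 1)·(∏_{j≠i} (ξ j)^(α j))·(c α)`
(the factor is `0` when `α i = 0`, as enforced by the factor `(α i : ℝ)`). -/
def Dscale {d : ℕ} (i : Fin d) (ξ : Fin d → ℝ) (c : (Fin d → ℕ) → ℝ) : (Fin d → ℕ) → ℝ :=
  fun α => (α i : ℝ) * ξ i ^ (α i - 1) * (∏ j ∈ Finset.univ.erase i, ξ j ^ α j) * c α

/-- A bounded linear operator on the native space: maps `H` to `H`, is linear on `H`,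
and is bounded on `H`. -/
def IsBoundedOpH {d : ℕ} (w : (Fin d → ℕ) → ℝ)
    (A : ((Fin d → ℕ) → ℝ) → ((Fin d → ℕ) → ℝ)) : Prop :=
  (∀ c, memH w c → memH w (A c)) ∧
  (∀ (a : ℝ) (c c' : (Fin d → ℕ) → ℝ), memH w c → memH w c' →
      A (a • c + c') = a • A c + A c') ∧
  (∃ M : ℝ, 0 ≤ M ∧ ∀ c, memH w c → normH w (A c) ≤ M * normH w c)

/-- Operator norm on the native space: the least bound constant. -/
def opNormH {d : ℕ} (w : (Fin d → ℕ) → ℝ)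
    (A : ((Fin d → ℕ) → ℝ) → ((Fin d → ℕ) → ℝ)) : ℝ :=
  sInf {M : ℝ | 0 ≤ M ∧ ∀ c, memH w c → normH w (A c) ≤ M * normH w c}

/-- The quadratic loss `Q_{A,g}(ξ; c) = ½⟨S_ξ c, A (S_ξ c)⟩ − ⟨g, S_ξ c⟩`. -/
def quadLoss {d : ℕ} (w : (Fin d → ℕ) → ℝ)
    (A : ((Fin d → ℕ) → ℝ) → ((Fin d → ℕ) → ℝ)) (g : (Fin d → ℕ) → ℝ)
    (ξ : Fin d → ℝ) (c : (Fin d → ℕ) → ℝ) : ℝ :=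
  (1/2) * innerH w (Sscale ξ c) (A (Sscale ξ c)) - innerH w g (Sscale ξ c)

/-- The ξ_i-derivative of the quadratic loss:
`½⟨D_i(ξ)c, A(S_ξ c)⟩ + ½⟨S_ξ c, A(D_i(ξ)c)⟩ − ⟨g, D_i(ξ)c⟩`. -/
def quadLossDeriv {d : ℕ} (w : (Fin d → ℕ) → ℝ)
    (A : ((Fin d → ℕ) → ℝ) → ((Fin d → ℕ) → ℝ)) (g : (Fin d → ℕ) → ℝ)
    (i : Fin d) (ξ : Fin d → ℝ) (c : (Fin d → ℕ) → ℝ) : ℝ :=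
  (1/2) * innerH w (Dscale i ξ c) (A (Sscale ξ c))
    + (1/2) * innerH w (Sscale ξ c) (A (Dscale i ξ c))
    - innerH w g (Dscale i ξ c)

/-- The function represented by a coefficient sequence: `f_c(x) = ∑_α (c α)·x^α`. -/
def evalF {d : ℕ} (c : (Fin d → ℕ) → ℝ) (x : Fin d → ℝ) : ℝ :=
  ∑' α : Fin d → ℕ, c α * ∏ i, x i ^ α i

/-- Sup norm of the represented function on a set `Z`. -/
def supNormOn {d : ℕ} (Z : Set (Fin d → ℝ)) (c : (Fin d → ℕ) → ℝ) : ℝ :=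
  ⨆ z : Z, |evalF c (z : Fin d → ℝ)|

/-!
Put `e = f̂ - f*`. Since `S_ξ`, `D_i(ξ)` and `Ĉ` are linear on `H`, the difference of the two
derivatives is a sum of four terms `½⟨X, Ĉ Y⟩`, each with one of `X, Y` built from `e`, and
`⟨ĝ, D_i(ξ) e⟩`. The hypotheses on `Ĉ` and `ĝ` bound these by sup norms on `Z`, and every
`S_ξ c`, `D_i(ξ) c` has sup norm at most `κ ‖c‖`: `f_{S_ξ c}(z) = f_c(ξ ∘ z)` and
`f_{D_i(ξ) c}(z) = z_i ∂_i f_c(ξ ∘ z)` with `ξ ∘ z ∈ Z`, and the values at `x = ξ ∘ z` are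
`H`-inner products of `c` with `α ↦ w α x^α / (α!)²` and `α ↦ w α ∂_i x^α / (α!)²`, whose norms
are at most `κ` by the hypotheses on `κ` (Cauchy–Schwarz).
-/

open Finset

variable {d : ℕ}

lemma mfact_pos (α : Fin d → ℕ) : 0 < mfact α :=
  prod_pos fun i _ => by positivity

lemma Real.abs_tsum_mul_le_sqrt_mul_sqrt {ι : Type*} {f g : ι → ℝ}
    (hf : Summable fun i => f i ^ 2) (hg : Summable fun i => g i ^ 2) :
    |∑' i, f i * g i| ≤ √(∑' i, f i ^ 2) * √(∑' i, g i ^ 2) := by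
  have hpq : (2 : ℝ).HolderConjugate 2 := .two_two
  have rpow_two_abs : ∀ h : ι → ℝ, (fun i => |h i| ^ (2 : ℝ)) = fun i => h i ^ 2 := fun h => by
    ext i; rw [Real.rpow_two, sq_abs]
  have hf' : Summable fun i => |f i| ^ (2 : ℝ) := by rwa [rpow_two_abs]
  have hg' : Summable fun i => |g i| ^ (2 : ℝ) := by rwa [rpow_two_abs]
  have hfg : Summable fun i => ‖f i * g i‖ := by
    simpa only [Real.norm_eq_abs, abs_mul] using
      Real.summable_mul_of_Lp_Lq_of_nonneg hpq (fun _ => abs_nonneg _) (fun _ => abs_nonneg _)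
        hf' hg'
  calc |∑' i, f i * g i| ≤ ∑' i, |f i| * |g i| := by
        simpa only [Real.norm_eq_abs, abs_mul] using norm_tsum_le_tsum_norm hfg
    _ ≤ (∑' i, |f i| ^ (2 : ℝ)) ^ (1 / 2 : ℝ) * (∑' i, |g i| ^ (2 : ℝ)) ^ (1 / 2 : ℝ) :=
        Real.inner_le_Lp_mul_Lq_tsum_of_nonneg hpq (fun _ => abs_nonneg _) (fun _ => abs_nonneg _)
          hf' hg'
    _ = √(∑' i, f i ^ 2) * √(∑' i, g i ^ 2) := by
        rw [rpow_two_abs, rpow_two_abs, Real.sqrt_eq_rpow, Real.sqrt_eq_rpow]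

lemma abs_half_add_half_sub_le (a b c d e : ℝ) :
    |1 / 2 * (a + b) + 1 / 2 * (c + d) - e| ≤ 1 / 2 * (|a| + |b|) + 1 / 2 * (|c| + |d|) + |e| := by
  rw [abs_le]
  constructor <;> linarith [le_abs_self a, neg_abs_le a, le_abs_self b, neg_abs_le b,
    le_abs_self c, neg_abs_le c, le_abs_self d, neg_abs_le d, le_abs_self e, neg_abs_le e]

lemma natCast_mul_pow_sub_one_le {t : ℝ} (h0 : 0 ≤ t) (h1 : t < 1) (n : ℕ) :
    n * t ^ (n - 1) ≤ (1 - t)⁻¹ := by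
  calc (n : ℝ) * t ^ (n - 1) = ∑ _k ∈ range n, t ^ (n - 1) := by simp
    _ ≤ ∑ k ∈ range n, t ^ k := sum_le_sum fun k hk =>
        pow_le_pow_of_le_one h0 h1.le (Nat.le_sub_one_of_lt (mem_range.mp hk))
    _ ≤ t ^ 0 / (1 - t) := by rw [range_eq_Ico]; exact geom_sum_Ico_le_of_lt_one h0 h1
    _ = (1 - t)⁻¹ := by simp

section NativeSpace

variable {w : (Fin d → ℕ) → ℝ}

lemma innerH_comm (c c' : (Fin d → ℕ) → ℝ) : innerH w c c' = innerH w c' c :=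
  tsum_congr fun α => by ring

lemma memH.sub (hw : ∀ α, 0 ≤ w α) {c c' : (Fin d → ℕ) → ℝ} (hc : memH w c)
    (hc' : memH w c') : memH w (c - c') := by
  refine ⟨fun α h => by simp [hc.1 α h, hc'.1 α h], ?_⟩
  refine Summable.of_nonneg_of_le (fun α => div_nonneg (by positivity) (hw α)) (fun α => ?_)
    ((hc.2.mul_left 2).add (hc'.2.mul_left 2))
  have hsq : (c α - c' α) ^ 2 ≤ 2 * c α ^ 2 + 2 * c' α ^ 2 := by
    nlinarith [sq_nonneg (c α + c' α)]
  calc mfact α ^ 2 * (c - c') α ^ 2 / w α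
      ≤ mfact α ^ 2 * (2 * c α ^ 2 + 2 * c' α ^ 2) / w α := by
        gcongr
        · exact hw α
        · exact hsq
    _ = 2 * (mfact α ^ 2 * c α ^ 2 / w α) + 2 * (mfact α ^ 2 * c' α ^ 2 / w α) := by ring

lemma memH.mul_of_abs_le (hw : ∀ α, 0 ≤ w α) {c : (Fin d → ℕ) → ℝ} (hc : memH w c)
    {φ : (Fin d → ℕ) → ℝ} {B : ℝ} (hφ : ∀ α, |φ α| ≤ B) :
    memH w (fun α => φ α * c α) := by
  refine ⟨fun α h => by simp [hc.1 α h], ?_⟩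
  refine Summable.of_nonneg_of_le (fun α => div_nonneg (by positivity) (hw α)) (fun α => ?_)
    (hc.2.mul_left (B ^ 2))
  have hsq : φ α ^ 2 ≤ B ^ 2 := sq_le_sq' (abs_le.mp (hφ α)).1 (abs_le.mp (hφ α)).2
  calc mfact α ^ 2 * (φ α * c α) ^ 2 / w α = φ α ^ 2 * (mfact α ^ 2 * c α ^ 2 / w α) := by ring
    _ ≤ B ^ 2 * (mfact α ^ 2 * c α ^ 2 / w α) := by
        gcongr
        exact div_nonneg (by positivity) (hw α)

lemma memH.summable_innerH (hw : ∀ α, 0 ≤ w α) {c c' : (Fin d → ℕ) → ℝ} (hc : memH w c)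
    (hc' : memH w c') : Summable fun α => mfact α ^ 2 * c α * c' α / w α := by
  refine Summable.of_norm_bounded ((hc.2.add hc'.2).div_const 2) fun α => ?_
  rw [Real.norm_eq_abs, abs_div, abs_of_nonneg (hw α), abs_mul, abs_mul,
    abs_of_nonneg (by positivity)]
  have h2 : 2 * (|c α| * |c' α|) ≤ c α ^ 2 + c' α ^ 2 := by
    nlinarith [sq_nonneg (|c α| - |c' α|), sq_abs (c α), sq_abs (c' α)]
  calc mfact α ^ 2 * |c α| * |c' α| / w α = mfact α ^ 2 * (2 * (|c α| * |c' α|)) / w α / 2 := by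
        ring
    _ ≤ mfact α ^ 2 * (c α ^ 2 + c' α ^ 2) / w α / 2 := by
        gcongr
        exact hw α
    _ = (mfact α ^ 2 * c α ^ 2 / w α + mfact α ^ 2 * c' α ^ 2 / w α) / 2 := by ring

lemma innerH_sub_left (hw : ∀ α, 0 ≤ w α) {a a' b : (Fin d → ℕ) → ℝ} (ha : memH w a)
    (ha' : memH w a') (hb : memH w b) :
    innerH w (a - a') b = innerH w a b - innerH w a' b := by
  rw [innerH, innerH, innerH, ← (ha.summable_innerH hw hb).tsum_sub (ha'.summable_innerH hw hb)]
  exact tsum_congr fun α => by simp only [Pi.sub_apply]; ring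

lemma innerH_sub_right (hw : ∀ α, 0 ≤ w α) {a b b' : (Fin d → ℕ) → ℝ} (ha : memH w a)
    (hb : memH w b) (hb' : memH w b') :
    innerH w a (b - b') = innerH w a b - innerH w a b' := by
  rw [innerH_comm, innerH_sub_left hw hb hb' ha, innerH_comm, innerH_comm a b']

/-- Cauchy–Schwarz after writing `c α P α = f α g α` with `f α = α! c α / √(w α)`, so that
`‖f‖₂ = ‖c‖`, and `g α = √(w α) P α / α!`. -/
lemma abs_tsum_mul_le_mul_normH (hw : ∀ α, 0 ≤ w α) {c P : (Fin d → ℕ) → ℝ} (hc : memH w c)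
    (hP : Summable fun α => w α * P α ^ 2 / mfact α ^ 2) {κ : ℝ} (hκ : 0 ≤ κ)
    (hPκ : ∑' α, w α * P α ^ 2 / mfact α ^ 2 ≤ κ ^ 2) :
    |∑' α, c α * P α| ≤ κ * normH w c := by
  set f : (Fin d → ℕ) → ℝ := fun α => mfact α * c α / √(w α)
  set g : (Fin d → ℕ) → ℝ := fun α => √(w α) * P α / mfact α
  have hf2 : ∀ α, f α ^ 2 = mfact α ^ 2 * c α ^ 2 / w α := fun α => by
    simp only [f, div_pow, mul_pow, Real.sq_sqrt (hw α)]
  have hg2 : ∀ α, g α ^ 2 = w α * P α ^ 2 / mfact α ^ 2 := fun α => by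
    simp only [g, div_pow, mul_pow, Real.sq_sqrt (hw α)]
  have hfg : ∀ α, c α * P α = f α * g α := fun α => by
    rcases (hw α).eq_or_lt with h | h
    · simp [f, g, ← h, hc.1 α h.symm]
    · have := (mfact_pos α).ne'
      have : √(w α) ≠ 0 := by positivity
      simp only [f, g]
      field_simp
  have hnorm : normH w c = √(∑' α, f α ^ 2) := by
    rw [normH, innerH]
    exact congrArg _ (tsum_congr fun α => by rw [hf2]; ring)
  rw [tsum_congr hfg, hnorm, mul_comm κ]
  refine (Real.abs_tsum_mul_le_sqrt_mul_sqrt (hc.2.congr fun α => (hf2 α).symm)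
    (hP.congr fun α => (hg2 α).symm)).trans ?_
  gcongr
  rw [tsum_congr hg2]
  exact (Real.sqrt_le_left hκ).mpr hPκ

end NativeSpace

section Monomials

def monom (x : Fin d → ℝ) (α : Fin d → ℕ) : ℝ := ∏ j, x j ^ α j

def monomDeriv (i : Fin d) (x : Fin d → ℝ) (α : Fin d → ℕ) : ℝ :=
  (α i : ℝ) * x i ^ (α i - 1) * ∏ j ∈ univ.erase i, x j ^ α j

variable {x : Fin d → ℝ}

lemma abs_prod_pow_le_one (hx : ∀ j, |x j| ≤ 1) (s : Finset (Fin d)) (α : Fin d → ℕ) :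
    |∏ j ∈ s, x j ^ α j| ≤ 1 := by
  rw [abs_prod]
  exact prod_le_one (fun j _ => abs_nonneg _) fun j _ => by
    rw [abs_pow]; exact pow_le_one₀ (abs_nonneg _) (hx j)

lemma abs_monom_le_one (hx : ∀ j, |x j| ≤ 1) (α : Fin d → ℕ) : |monom x α| ≤ 1 :=
  abs_prod_pow_le_one hx univ α

lemma abs_monomDeriv_le {i : Fin d} (hx : ∀ j, |x j| ≤ 1) (hxi : |x i| < 1) (α : Fin d → ℕ) :
    |monomDeriv i x α| ≤ (1 - |x i|)⁻¹ := by
  rw [monomDeriv, abs_mul, abs_mul, abs_pow, Nat.abs_cast]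
  calc (α i : ℝ) * |x i| ^ (α i - 1) * |∏ j ∈ univ.erase i, x j ^ α j|
      ≤ (1 - |x i|)⁻¹ * 1 := by
        gcongr
        · exact natCast_mul_pow_sub_one_le (abs_nonneg _) hxi _
        · exact abs_prod_pow_le_one hx _ α
    _ = (1 - |x i|)⁻¹ := mul_one _

lemma monom_mul (ξ z : Fin d → ℝ) (α : Fin d → ℕ) :
    monom (ξ * z) α = monom ξ α * monom z α := by
  simp only [monom, Pi.mul_apply, mul_pow, prod_mul_distrib]

lemma monomDeriv_mul_monom (i : Fin d) (ξ z : Fin d → ℝ) (α : Fin d → ℕ) :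
    monomDeriv i ξ α * monom z α = z i * monomDeriv i (ξ * z) α := by
  rw [monom, ← mul_prod_erase _ _ (mem_univ i)]
  simp only [monomDeriv, Pi.mul_apply, mul_pow, prod_mul_distrib]
  rcases h : α i with _ | m
  · simp
  · simp only [Nat.add_sub_cancel, pow_succ]
    ring

end Monomials

section Scaling

variable {w : (Fin d → ℕ) → ℝ} {Z : Set (Fin d → ℝ)} {ξ : Fin d → ℝ} {κ : ℝ}

lemma summable_weighted_sq_of_abs_le (hw : ∀ α, 0 ≤ w α)
    (hwsum : Summable fun α => w α / mfact α ^ 2) {P : (Fin d → ℕ) → ℝ} {B : ℝ}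
    (hP : ∀ α, |P α| ≤ B) : Summable fun α => w α * P α ^ 2 / mfact α ^ 2 := by
  refine Summable.of_nonneg_of_le (fun α => by have := hw α; positivity) (fun α => ?_)
    (hwsum.mul_left (B ^ 2))
  have hsq : P α ^ 2 ≤ B ^ 2 := sq_le_sq' (abs_le.mp (hP α)).1 (abs_le.mp (hP α)).2
  calc w α * P α ^ 2 / mfact α ^ 2 = P α ^ 2 * (w α / mfact α ^ 2) := by ring
    _ ≤ B ^ 2 * (w α / mfact α ^ 2) := by
        gcongr
        exact div_nonneg (hw α) (sq_nonneg _)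

lemma memH_Sscale (hw : ∀ α, 0 ≤ w α) (hξ : ∀ j, |ξ j| ≤ 1) {c : (Fin d → ℕ) → ℝ}
    (hc : memH w c) : memH w (Sscale ξ c) :=
  hc.mul_of_abs_le hw (abs_monom_le_one hξ)

lemma memH_Dscale (hw : ∀ α, 0 ≤ w α) {i : Fin d} (hξ : ∀ j, |ξ j| ≤ 1) (hξi : |ξ i| < 1)
    {c : (Fin d → ℕ) → ℝ} (hc : memH w c) : memH w (Dscale i ξ c) :=
  hc.mul_of_abs_le hw (abs_monomDeriv_le hξ hξi)

lemma Sscale_sub (ξ : Fin d → ℝ) (c c' : (Fin d → ℕ) → ℝ) :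
    Sscale ξ (c - c') = Sscale ξ c - Sscale ξ c' :=
  funext fun _ => mul_sub _ _ _

lemma Dscale_sub (i : Fin d) (ξ : Fin d → ℝ) (c c' : (Fin d → ℕ) → ℝ) :
    Dscale i ξ (c - c') = Dscale i ξ c - Dscale i ξ c' :=
  funext fun _ => mul_sub _ _ _

lemma evalF_Sscale (ξ : Fin d → ℝ) (c : (Fin d → ℕ) → ℝ) (z : Fin d → ℝ) :
    evalF (Sscale ξ c) z = evalF c (ξ * z) :=
  tsum_congr fun α => by
    change monom ξ α * c α * monom z α = c α * monom (ξ * z) α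
    rw [monom_mul]; ring

lemma evalF_Dscale (i : Fin d) (ξ : Fin d → ℝ) (c : (Fin d → ℕ) → ℝ) (z : Fin d → ℝ) :
    evalF (Dscale i ξ c) z = z i * ∑' α, c α * monomDeriv i (ξ * z) α := by
  rw [evalF, ← tsum_mul_left]
  refine tsum_congr fun α => ?_
  change monomDeriv i ξ α * c α * monom z α = _
  rw [mul_right_comm, monomDeriv_mul_monom]; ring

lemma supNormOn_Sscale_le (hw : ∀ α, 0 ≤ w α) (hwsum : Summable fun α => w α / mfact α ^ 2)
    (hZ : ∀ z ∈ Z, ∀ j, |z j| ≤ 1) (hξZ : ∀ z ∈ Z, ξ * z ∈ Z) (hκ : 0 ≤ κ)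
    (hκ0 : ∀ z ∈ Z, ∑' α, w α * monom z α ^ 2 / mfact α ^ 2 ≤ κ ^ 2)
    {c : (Fin d → ℕ) → ℝ} (hc : memH w c) :
    supNormOn Z (Sscale ξ c) ≤ κ * normH w c := by
  refine Real.iSup_le (fun ⟨z, hz⟩ => ?_) (mul_nonneg hκ (Real.sqrt_nonneg _))
  rw [evalF_Sscale]
  exact abs_tsum_mul_le_mul_normH hw hc
    (summable_weighted_sq_of_abs_le hw hwsum (abs_monom_le_one (hZ _ (hξZ z hz)))) hκ
    (hκ0 _ (hξZ z hz))

lemma supNormOn_Dscale_le (hw : ∀ α, 0 ≤ w α) (hwsum : Summable fun α => w α / mfact α ^ 2)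
    {i : Fin d} (hZ : ∀ z ∈ Z, ∀ j, |z j| < 1) (hξZ : ∀ z ∈ Z, ξ * z ∈ Z) (hκ : 0 ≤ κ)
    (hκ1 : ∀ z ∈ Z, ∑' α, w α * monomDeriv i z α ^ 2 / mfact α ^ 2 ≤ κ ^ 2)
    {c : (Fin d → ℕ) → ℝ} (hc : memH w c) :
    supNormOn Z (Dscale i ξ c) ≤ κ * normH w c := by
  refine Real.iSup_le (fun ⟨z, hz⟩ => ?_) (mul_nonneg hκ (Real.sqrt_nonneg _))
  have hξz := hZ _ (hξZ z hz)
  rw [evalF_Dscale, abs_mul, ← one_mul (κ * normH w c)]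
  exact mul_le_mul (hZ z hz i).le
    (abs_tsum_mul_le_mul_normH hw hc (summable_weighted_sq_of_abs_le hw hwsum
      (abs_monomDeriv_le (fun j => (hξz j).le) (hξz i))) hκ (hκ1 _ (hξZ z hz)))
    (abs_nonneg _) zero_le_one

end Scaling

section QuadLoss

variable {w : (Fin d → ℕ) → ℝ} {A : ((Fin d → ℕ) → ℝ) → ((Fin d → ℕ) → ℝ)}

lemma map_sub_of_linearOnH
    (hA : ∀ (a : ℝ) (c c' : (Fin d → ℕ) → ℝ), memH w c → memH w c' →
      A (a • c + c') = a • A c + A c')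
    {c c' : (Fin d → ℕ) → ℝ} (hc : memH w c) (hc' : memH w c') : A (c - c') = A c - A c' := by
  simpa [neg_add_eq_sub] using hA (-1) c' c hc' hc

lemma innerH_map_sub_innerH_map (hw : ∀ α, 0 ≤ w α) (hAH : ∀ c, memH w c → memH w (A c))
    (hA : ∀ (a : ℝ) (c c' : (Fin d → ℕ) → ℝ), memH w c → memH w c' →
      A (a • c + c') = a • A c + A c')
    {a a' b b' : (Fin d → ℕ) → ℝ} (ha : memH w a) (ha' : memH w a') (hb : memH w b)
    (hb' : memH w b') :
    innerH w a (A b) - innerH w a' (A b') = innerH w (a - a') (A b) + innerH w a' (A (b - b')) := by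
  rw [innerH_sub_left hw ha ha' (hAH b hb), map_sub_of_linearOnH hA hb hb',
    innerH_sub_right hw ha' (hAH b hb) (hAH b' hb')]
  ring

lemma quadLossDeriv_sub (hw : ∀ α, 0 ≤ w α) (hAH : ∀ c, memH w c → memH w (A c))
    (hA : ∀ (a : ℝ) (c c' : (Fin d → ℕ) → ℝ), memH w c → memH w c' →
      A (a • c + c') = a • A c + A c')
    {g : (Fin d → ℕ) → ℝ} (hg : memH w g) {i : Fin d} {ξ : Fin d → ℝ}
    {c c' : (Fin d → ℕ) → ℝ} (hSc : memH w (Sscale ξ c)) (hSc' : memH w (Sscale ξ c'))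
    (hDc : memH w (Dscale i ξ c)) (hDc' : memH w (Dscale i ξ c')) :
    quadLossDeriv w A g i ξ c - quadLossDeriv w A g i ξ c' =
      (1 / 2) * (innerH w (Dscale i ξ (c - c')) (A (Sscale ξ c))
          + innerH w (Dscale i ξ c') (A (Sscale ξ (c - c'))))
        + (1 / 2) * (innerH w (Sscale ξ (c - c')) (A (Dscale i ξ c))
          + innerH w (Sscale ξ c') (A (Dscale i ξ (c - c'))))
        - innerH w g (Dscale i ξ (c - c')) := by
  have hD := innerH_map_sub_innerH_map hw hAH hA hDc hDc' hSc hSc'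
  have hS := innerH_map_sub_innerH_map hw hAH hA hSc hSc' hDc hDc'
  rw [Sscale_sub, Dscale_sub, ← hD, ← hS, innerH_sub_right hw hg hDc hDc', quadLossDeriv,
    quadLossDeriv]
  ring

end QuadLoss

theorem lemma4i_deterministic_core_general
    (d : ℕ)
    (w : (Fin d → ℕ) → ℝ) (hw : ∀ α, 0 ≤ w α)
    (hwsum : Summable fun α : Fin d → ℕ => w α / mfact α ^ 2)
    (Z : Set (Fin d → ℝ))
    (hZsub : ∀ z ∈ Z, ∀ j, z j ∈ Set.Ioo (-1:ℝ) 1)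
    (hZcontr : ∀ z ∈ Z, ∀ ξ : Fin d → ℝ, (∀ j, ξ j ∈ Set.Icc (0:ℝ) 1) →
      (fun j => ξ j * z j) ∈ Z)
    (κ : ℝ) (hκ : 0 < κ)
    (hκ0 : ∀ z ∈ Z, ∑' α : Fin d → ℕ, w α * (∏ j, z j ^ α j) ^ 2 / mfact α ^ 2 ≤ κ ^ 2)
    (hκ1 : ∀ z ∈ Z, ∀ i : Fin d, ∑' α : Fin d → ℕ,
      w α * ((α i : ℝ) * (z i ^ (α i - 1) * ∏ j ∈ Finset.univ.erase i, z j ^ α j)) ^ 2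
        / mfact α ^ 2 ≤ κ ^ 2)
    (Chat : ((Fin d → ℕ) → ℝ) → ((Fin d → ℕ) → ℝ))
    (hChatH : ∀ c, memH w c → memH w (Chat c))
    (hChatLin : ∀ (a : ℝ) (c c' : (Fin d → ℕ) → ℝ), memH w c → memH w c' →
      Chat (a • c + c') = a • Chat c + Chat c')
    (ghat : (Fin d → ℕ) → ℝ) (hghat : memH w ghat)
    (β : ℝ) (hβ : 0 < β)
    (hCbound : ∀ c c' : (Fin d → ℕ) → ℝ, memH w c → memH w c' →
      |innerH w c (Chat c')| ≤ β * supNormOn Z c * supNormOn Z c')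
    (hgbound : ∀ c : (Fin d → ℕ) → ℝ, memH w c →
      |innerH w c ghat| ≤ β * supNormOn Z c) :
    ∀ fhat fstar : (Fin d → ℕ) → ℝ, memH w fhat → memH w fstar → ∀ i : Fin d,
      ∀ ξ : Fin d → ℝ, (∀ j, ξ j ∈ Set.Ioo (0:ℝ) 1) →
        |quadLossDeriv w Chat ghat i ξ fhat - quadLossDeriv w Chat ghat i ξ fstar| ≤
          (κ ^ 2 * β * (normH w fhat + normH w fstar) + κ * β) * normH w (fhat - fstar) := by
  intro f f' hf hf' i ξ hξ
  have hξ1 : ∀ j, |ξ j| < 1 := fun j => abs_lt.mpr ⟨by linarith [(hξ j).1], (hξ j).2⟩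
  have hZ : ∀ z ∈ Z, ∀ j, |z j| < 1 := fun z hz j => abs_lt.mpr (hZsub z hz j)
  have hξZ : ∀ z ∈ Z, ξ * z ∈ Z := fun z hz =>
    hZcontr z hz ξ fun j => Set.Ioo_subset_Icc_self (hξ j)
  have hκ1' : ∀ z ∈ Z, ∑' α, w α * monomDeriv i z α ^ 2 / mfact α ^ 2 ≤ κ ^ 2 := fun z hz => by
    simpa only [monomDeriv, mul_assoc] using hκ1 z hz i
  have hS : ∀ c, memH w c → memH w (Sscale ξ c) := fun c => memH_Sscale hw fun j => (hξ1 j).le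
  have hD : ∀ c, memH w c → memH w (Dscale i ξ c) :=
    fun c => memH_Dscale hw (fun j => (hξ1 j).le) (hξ1 i)
  have hSsup : ∀ c, memH w c → supNormOn Z (Sscale ξ c) ≤ κ * normH w c :=
    fun c => supNormOn_Sscale_le hw hwsum (fun z hz j => (hZ z hz j).le) hξZ hκ.le hκ0
  have hDsup : ∀ c, memH w c → supNormOn Z (Dscale i ξ c) ≤ κ * normH w c :=
    fun c => supNormOn_Dscale_le hw hwsum hZ hξZ hκ.le hκ1'
  have hC : ∀ {x y x₀ y₀}, memH w x → memH w y → supNormOn Z x ≤ κ * normH w x₀ →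
      supNormOn Z y ≤ κ * normH w y₀ →
      |innerH w x (Chat y)| ≤ β * (κ * normH w x₀) * (κ * normH w y₀) := fun hx hy hx₀ hy₀ =>
    (hCbound _ _ hx hy).trans (mul_le_mul (mul_le_mul_of_nonneg_left hx₀ hβ.le) hy₀
      (Real.iSup_nonneg fun _ => abs_nonneg _)
      (mul_nonneg hβ.le (mul_nonneg hκ.le (Real.sqrt_nonneg _))))
  have he := hf.sub hw hf'
  have h1 := hC (hD _ he) (hS _ hf) (hDsup _ he) (hSsup _ hf)
  have h2 := hC (hD _ hf') (hS _ he) (hDsup _ hf') (hSsup _ he)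
  have h3 := hC (hS _ he) (hD _ hf) (hSsup _ he) (hDsup _ hf)
  have h4 := hC (hS _ hf') (hD _ he) (hSsup _ hf') (hDsup _ he)
  have h5 : |innerH w ghat (Dscale i ξ (f - f'))| ≤ β * (κ * normH w (f - f')) := by
    rw [innerH_comm]
    exact (hgbound _ (hD _ he)).trans (by gcongr; exact hDsup _ he)
  rw [quadLossDeriv_sub hw hChatH hChatLin hghat (hS _ hf) (hS _ hf') (hD _ hf) (hD _ hf')]
  refine (abs_half_add_half_sub_le _ _ _ _ _).trans ?_
  linarith

/-- Deterministic core of Lemma 4(i): uniform bound on the difference of the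
ξ_i-derivatives of the empirical quadratic loss at two elements of the native space,
in terms of the RKHS distance between them. -/
theorem lemma4i_deterministic_core
    (d : ℕ) (hd : 1 ≤ d)
    (w : (Fin d → ℕ) → ℝ) (hw : ∀ α, 0 ≤ w α)
    (hwsum : Summable fun α : Fin d → ℕ => w α / mfact α ^ 2)
    (Z : Set (Fin d → ℝ)) (hZne : Z.Nonempty)
    (hZsub : ∀ z ∈ Z, ∀ j, z j ∈ Set.Ioo (-1:ℝ) 1)
    (hZcontr : ∀ z ∈ Z, ∀ ξ : Fin d → ℝ, (∀ j, ξ j ∈ Set.Icc (0:ℝ) 1) →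
      (fun j => ξ j * z j) ∈ Z)
    (κ : ℝ) (hκ : 0 < κ)
    (hκ0 : ∀ z ∈ Z, ∑' α : Fin d → ℕ, w α * (∏ j, z j ^ α j) ^ 2 / mfact α ^ 2 ≤ κ ^ 2)
    (hκ1 : ∀ z ∈ Z, ∀ i : Fin d, ∑' α : Fin d → ℕ,
      w α * ((α i : ℝ) * (z i ^ (α i - 1) * ∏ j ∈ Finset.univ.erase i, z j ^ α j)) ^ 2
        / mfact α ^ 2 ≤ κ ^ 2)
    (Chat : ((Fin d → ℕ) → ℝ) → ((Fin d → ℕ) → ℝ))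
    (hChatH : ∀ c, memH w c → memH w (Chat c))
    (hChatLin : ∀ (a : ℝ) (c c' : (Fin d → ℕ) → ℝ), memH w c → memH w c' →
      Chat (a • c + c') = a • Chat c + Chat c')
    (ghat : (Fin d → ℕ) → ℝ) (hghat : memH w ghat)
    (β : ℝ) (hβ : 0 < β)
    (hCbound : ∀ c c' : (Fin d → ℕ) → ℝ, memH w c → memH w c' →
      |innerH w c (Chat c')| ≤ β * supNormOn Z c * supNormOn Z c')
    (hgbound : ∀ c : (Fin d → ℕ) → ℝ, memH w c →
      |innerH w c ghat| ≤ β * supNormOn Z c) :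
    ∀ fhat fstar : (Fin d → ℕ) → ℝ, memH w fhat → memH w fstar → ∀ i : Fin d,
      ∀ ξ : Fin d → ℝ, (∀ j, ξ j ∈ Set.Ioo (0:ℝ) 1) →
        |quadLossDeriv w Chat ghat i ξ fhat - quadLossDeriv w Chat ghat i ξ fstar| ≤
          (κ ^ 2 * β * (normH w fhat + normH w fstar) + κ * β) * normH w (fhat - fstar) :=
  lemma4i_deterministic_core_general d w hw hwsum Z hZsub hZcontr κ hκ hκ0 hκ1 Chat hChatH hChatLin
    ghat hghat β hβ hCbound hgbound
end
end

section
/- Lemma B.2, equation (6) (norm continuity of the scaling map). For every c ∈ H, every ξ ∈ (0,1)^d and every i ∈ Fin d, lim_{t→0} ‖S_{ξ + t·e_i} c − S_ξ c‖ = 0, where e_i denotes the i-th standard unit vector of ℝ^d and t ranges over values small enough that ξ + t·e_i ∈ (0,1)^d. -/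
open MeasureTheory Filter Topology

noncomputable section

/-! The coefficients of `S_{ξ+t·e_i} c − S_ξ c` are `(ξ_t^α − ξ^α)·c α`, which tend to `0`
and are dominated by `|c α|` because all monomials lie in `[0,1]` on the unit cube. Dominated
convergence for the series defining `‖·‖²` then gives the claim. -/

lemma tendsto_normH_zero_of_dominated {d : ℕ} {w : (Fin d → ℕ) → ℝ} {c : (Fin d → ℕ) → ℝ}
    (hc : Summable fun α : Fin d → ℕ => mfact α ^ 2 * c α ^ 2 / w α)
    {ι : Type*} {l : Filter ι} {f : ι → (Fin d → ℕ) → ℝ}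
    (hf : ∀ α, Tendsto (fun t => f t α) l (𝓝 0))
    (hfc : ∀ᶠ t in l, ∀ α, |f t α| ≤ |c α|) :
    Tendsto (fun t => normH w (f t)) l (𝓝 0) := by
  have hinner : Tendsto (fun t => innerH w (f t) (f t)) l (𝓝 0) := by
    have h := tendsto_tsum_of_dominated_convergence (𝓕 := l) hc.abs
      (f := fun t α => mfact α ^ 2 * f t α * f t α / w α) (g := fun _ => 0)
      (fun α => by simpa using (((hf α).const_mul _).mul (hf α)).div_const (w α))
      (hfc.mono fun t ht α => by
        rw [Real.norm_eq_abs, mul_assoc, ← sq]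
        simp only [abs_div, abs_mul, abs_pow]
        gcongr _ * ?_ / _
        exact pow_le_pow_left₀ (abs_nonneg _) (ht α) 2)
    simpa only [innerH, tsum_zero] using h
  simpa [normH] using hinner.sqrt

lemma prod_pow_mem_Icc {ι : Type*} (s : Finset ι) {x : ι → ℝ} (hx : ∀ j, x j ∈ Set.Icc 0 1)
    (α : ι → ℕ) : ∏ j ∈ s, x j ^ α j ∈ Set.Icc (0 : ℝ) 1 :=
  ⟨Finset.prod_nonneg fun j _ => pow_nonneg (hx j).1 _,
    Finset.prod_le_one (fun j _ => pow_nonneg (hx j).1 _)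
      fun j _ => pow_le_one₀ (hx j).1 (hx j).2⟩

lemma Sscale_sub_Sscale_apply {d : ℕ} (η ξ : Fin d → ℝ) (c : (Fin d → ℕ) → ℝ)
    (α : Fin d → ℕ) :
    (Sscale η c - Sscale ξ c) α = ((∏ j, η j ^ α j) - ∏ j, ξ j ^ α j) * c α := by
  simp only [Pi.sub_apply, Sscale, sub_mul]

lemma abs_Sscale_sub_Sscale_apply_le {d : ℕ} {η ξ : Fin d → ℝ}
    (hη : ∀ j, η j ∈ Set.Icc 0 1) (hξ : ∀ j, ξ j ∈ Set.Icc 0 1) (c : (Fin d → ℕ) → ℝ)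
    (α : Fin d → ℕ) : |(Sscale η c - Sscale ξ c) α| ≤ |c α| := by
  obtain ⟨hη₀, hη₁⟩ := prod_pow_mem_Icc Finset.univ hη α
  obtain ⟨hξ₀, hξ₁⟩ := prod_pow_mem_Icc Finset.univ hξ α
  rw [Sscale_sub_Sscale_apply, abs_mul]
  exact mul_le_of_le_one_left (abs_nonneg _) (abs_sub_le_of_nonneg_of_le hη₀ hη₁ hξ₀ hξ₁)

lemma continuous_Sscale_apply {d : ℕ} (c : (Fin d → ℕ) → ℝ) (α : Fin d → ℕ) :
    Continuous fun ξ : Fin d → ℝ => Sscale ξ c α := by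
  unfold Sscale
  fun_prop

theorem scaling_map_norm_continuity_general
    (d : ℕ)
    (w : (Fin d → ℕ) → ℝ)
    (c : (Fin d → ℕ) → ℝ) (hc : memH w c)
    (ξ : Fin d → ℝ) (hξ : ∀ j, ξ j ∈ Set.Ioo (0:ℝ) 1) (i : Fin d) :
    Tendsto
      (fun t : ℝ => normH w (Sscale (Function.update ξ i (ξ i + t)) c - Sscale ξ c))
      (𝓝[{t : ℝ | ∀ j, Function.update ξ i (ξ i + t) j ∈ Set.Ioo (0:ℝ) 1}] 0)
      (𝓝 0) := by
  refine tendsto_normH_zero_of_dominated hc.2 (fun α => ?_) ?_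
  · have hξt : Continuous fun t : ℝ => Function.update ξ i (ξ i + t) :=
      continuous_const.update i (continuous_const.add continuous_id)
    refine Tendsto.mono_left ?_ nhdsWithin_le_nhds
    simpa using (((continuous_Sscale_apply c α).comp hξt).tendsto 0).sub_const (Sscale ξ c α)
  · filter_upwards [self_mem_nhdsWithin] with t ht α
    exact abs_Sscale_sub_Sscale_apply_le (fun j => Set.Ioo_subset_Icc_self (ht j))
      (fun j => Set.Ioo_subset_Icc_self (hξ j)) c α

/-- Lemma B.2, equation (6): norm continuity of the scaling map. For `c ∈ H`,
`ξ ∈ (0,1)^d` and a coordinate `i`, `‖S_{ξ + t·e_i} c − S_ξ c‖ → 0` as `t → 0`,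
where `t` ranges over values with `ξ + t·e_i ∈ (0,1)^d`. -/
theorem scaling_map_norm_continuity
    (d : ℕ) (hd : 1 ≤ d)
    (w : (Fin d → ℕ) → ℝ) (hw : ∀ α, 0 ≤ w α)
    (hwsum : Summable fun α : Fin d → ℕ => w α / mfact α ^ 2)
    (c : (Fin d → ℕ) → ℝ) (hc : memH w c)
    (ξ : Fin d → ℝ) (hξ : ∀ j, ξ j ∈ Set.Ioo (0:ℝ) 1) (i : Fin d) :
    Tendsto
      (fun t : ℝ => normH w (Sscale (Function.update ξ i (ξ i + t)) c - Sscale ξ c))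
      (𝓝[{t : ℝ | ∀ j, Function.update ξ i (ξ i + t) j ∈ Set.Ioo (0:ℝ) 1}] 0)
      (𝓝 0) :=
  scaling_map_norm_continuity_general d w c hc ξ hξ i
end
end

section
/- Lemma B.2, equation (7) (norm differentiability of the scaling map). For every c ∈ H, every ξ ∈ (0,1)^d and every i ∈ Fin d, lim_{t→0} ‖ (S_{ξ + t·e_i} c − S_ξ c)/t − D_i(ξ) c ‖ = 0, where e_i denotes the i-th standard unit vector of ℝ^d and t ranges over nonzero values small enough that ξ + t·e_i ∈ (0,1)^d. -/
open MeasureTheory Filter Topology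

noncomputable section

/-!
Coefficientwise, `(S_{ξ + t eᵢ} c − S_ξ c)/t − Dᵢ(ξ) c` at `α` is `t⁻¹` times the second-order
Taylor remainder of `x ↦ x ^ αᵢ` at `ξᵢ`, times `∏_{j ≠ i} ξⱼ ^ αⱼ · c α`. On `[-ρ, ρ]` that
remainder is at most `(αᵢ choose 2) ρ ^ (αᵢ - 2) t²`, and for `ρ < 1` these constants are
bounded uniformly in `αᵢ`. So the difference is dominated coefficientwise by `K |t| |c|`, and
its norm in `H` is at most `K |t| ‖c‖`.
-/

open Finset

theorem abs_pow_sub_pow_sub_mul_le {a b ρ : ℝ} (ha : |a| ≤ ρ) (hb : |b| ≤ ρ) (n : ℕ) :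
    |a ^ n - b ^ n - n * b ^ (n - 1) * (a - b)| ≤ n.choose 2 * ρ ^ (n - 2) * (a - b) ^ 2 := by
  induction n with
  | zero => simp
  | succ n ih =>
    have hρ : 0 ≤ ρ := (abs_nonneg a).trans ha
    have hrec : a ^ (n + 1) - b ^ (n + 1) - ((n + 1 : ℕ) : ℝ) * b ^ (n + 1 - 1) * (a - b) =
        a * (a ^ n - b ^ n - n * b ^ (n - 1) * (a - b)) + n * b ^ (n - 1) * (a - b) ^ 2 := by
      cases n with
      | zero => simp
      | succ m => simp only [Nat.add_sub_cancel]; push_cast; ring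
    have hshift : ρ * (n.choose 2 * ρ ^ (n - 2)) = n.choose 2 * ρ ^ (n - 1) := by
      rcases lt_or_ge n 2 with hn | hn
      · simp [Nat.choose_eq_zero_of_lt hn]
      · rw [show n - 1 = n - 2 + 1 by omega, pow_succ]
        ring
    calc _ = |a * (a ^ n - b ^ n - n * b ^ (n - 1) * (a - b)) + n * b ^ (n - 1) * (a - b) ^ 2| := by
          rw [hrec]
      _ ≤ |a| * |a ^ n - b ^ n - n * b ^ (n - 1) * (a - b)| + n * |b| ^ (n - 1) * (a - b) ^ 2 := by
          refine (abs_add_le _ _).trans_eq ?_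
          simp only [abs_mul, abs_pow, Nat.abs_cast, sq_abs]
      _ ≤ ρ * (n.choose 2 * ρ ^ (n - 2) * (a - b) ^ 2) + n * ρ ^ (n - 1) * (a - b) ^ 2 := by
          gcongr
      _ = (n + 1).choose 2 * ρ ^ (n + 1 - 2) * (a - b) ^ 2 := by
          rw [Nat.choose_succ_succ', Nat.choose_one_right, show n + 1 - 2 = n - 1 by omega]
          push_cast
          linear_combination (a - b) ^ 2 * hshift

theorem bddAbove_range_choose_two_mul_pow {ρ : ℝ} (hρ : |ρ| < 1) :
    BddAbove (Set.range fun n : ℕ => (n.choose 2 : ℝ) * ρ ^ (n - 2)) := by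
  have hsum := summable_choose_mul_geometric_of_norm_lt_one (R := ℝ) 2 hρ
  have hlim : Tendsto (fun n : ℕ => (n.choose 2 : ℝ) * ρ ^ (n - 2)) atTop (𝓝 0) :=
    (tendsto_add_atTop_iff_nat 2).mp (by simpa using hsum.tendsto_atTop_zero)
  exact hlim.bddAbove_range

theorem prod_update_pow {ι M : Type*} [Fintype ι] [DecidableEq ι] [CommMonoid M]
    (ξ : ι → M) (i : ι) (x : M) (α : ι → ℕ) :
    ∏ j, Function.update ξ i x j ^ α j = x ^ α i * ∏ j ∈ univ.erase i, ξ j ^ α j := by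
  rw [← mul_prod_erase _ _ (mem_univ i), Function.update_self]
  congr 1
  exact prod_congr rfl fun j hj => by rw [Function.update_of_ne (ne_of_mem_erase hj)]

section NativeSpace

variable {d : ℕ}

theorem normH_le_mul_of_abs_le {w : (Fin d → ℕ) → ℝ} (hw : ∀ α, 0 ≤ w α)
    {u v : (Fin d → ℕ) → ℝ} (hu : Summable fun α => mfact α ^ 2 * u α ^ 2 / w α)
    {L : ℝ} (hL : 0 ≤ L) (hvu : ∀ α, |v α| ≤ L * |u α|) :
    normH w v ≤ L * normH w u := by
  have hterm : ∀ α, mfact α ^ 2 * v α * v α / w α ≤ L ^ 2 * (mfact α ^ 2 * u α * u α / w α) := by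
    intro α
    have hcoef : 0 ≤ mfact α ^ 2 / w α := div_nonneg (sq_nonneg _) (hw α)
    calc mfact α ^ 2 * v α * v α / w α = mfact α ^ 2 / w α * (|v α| * |v α|) := by
          rw [abs_mul_abs_self]; ring
      _ ≤ mfact α ^ 2 / w α * ((L * |u α|) * (L * |u α|)) :=
          mul_le_mul_of_nonneg_left (mul_self_le_mul_self (abs_nonneg _) (hvu α)) hcoef
      _ = L ^ 2 * (mfact α ^ 2 * u α * u α / w α) := by
          linear_combination (L ^ 2 * mfact α ^ 2 / w α) * abs_mul_abs_self (u α)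
  have hu' : Summable fun α => L ^ 2 * (mfact α ^ 2 * u α * u α / w α) :=
    (hu.congr fun α => by ring).mul_left _
  have hv : Summable fun α => mfact α ^ 2 * v α * v α / w α :=
    hu'.of_nonneg_of_le (fun α => by
      rw [mul_assoc, ← sq]; exact div_nonneg (mul_nonneg (sq_nonneg _) (sq_nonneg _)) (hw α)) hterm
  have hinner : innerH w v v ≤ L ^ 2 * innerH w u u := by
    rw [innerH, innerH, ← tsum_mul_left]
    exact hv.tsum_le_tsum hterm hu'
  calc normH w v ≤ Real.sqrt (L ^ 2 * innerH w u u) := Real.sqrt_le_sqrt hinner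
    _ = L * normH w u := by rw [Real.sqrt_mul (sq_nonneg L), Real.sqrt_sq hL, normH]

theorem diffQuot_sub_Dscale_apply (c : (Fin d → ℕ) → ℝ) (ξ : Fin d → ℝ) (i : Fin d)
    {t : ℝ} (ht : t ≠ 0) (α : Fin d → ℕ) :
    (t⁻¹ • (Sscale (Function.update ξ i (ξ i + t)) c - Sscale ξ c) - Dscale i ξ c) α =
      t⁻¹ * ((ξ i + t) ^ α i - ξ i ^ α i - α i * ξ i ^ (α i - 1) * t) *
        ((∏ j ∈ univ.erase i, ξ j ^ α j) * c α) := by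
  have hξ := prod_update_pow ξ i (ξ i) α
  rw [Function.update_eq_self] at hξ
  simp only [Pi.sub_apply, Pi.smul_apply, smul_eq_mul, Sscale, Dscale, prod_update_pow, hξ]
  field_simp

theorem abs_diffQuot_sub_Dscale_apply_le {ξ : Fin d → ℝ} (hξ : ∀ j, |ξ j| ≤ 1) {i : Fin d}
    {t ρ K : ℝ} (ht : t ≠ 0) (hρ : |ξ i| ≤ ρ) (hρt : |ξ i + t| ≤ ρ)
    (hK : ∀ n : ℕ, (n.choose 2 : ℝ) * ρ ^ (n - 2) ≤ K) (c : (Fin d → ℕ) → ℝ) (α : Fin d → ℕ) :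
    |(t⁻¹ • (Sscale (Function.update ξ i (ξ i + t)) c - Sscale ξ c) - Dscale i ξ c) α| ≤
      K * |t| * |c α| := by
  have hprod : |∏ j ∈ univ.erase i, ξ j ^ α j| ≤ 1 := by
    rw [abs_prod]
    exact prod_le_one (fun _ _ => abs_nonneg _) fun j _ => by
      rw [abs_pow]; exact pow_le_one₀ (abs_nonneg _) (hξ j)
  have htaylor := abs_pow_sub_pow_sub_mul_le hρt hρ (α i)
  rw [add_sub_cancel_left] at htaylor
  rw [diffQuot_sub_Dscale_apply c ξ i ht, abs_mul, abs_mul, abs_mul, abs_inv]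
  have hK0 : 0 ≤ K := by simpa using hK 0
  calc _ ≤ |t|⁻¹ * (K * t ^ 2) * (1 * |c α|) := by
        gcongr
        exact htaylor.trans (mul_le_mul_of_nonneg_right (hK _) (sq_nonneg t))
    _ = K * |t| * |c α| := by
        rw [← sq_abs t]
        field_simp

end NativeSpace

theorem scaling_map_norm_differentiability_general
    (d : ℕ)
    (w : (Fin d → ℕ) → ℝ) (hw : ∀ α, 0 ≤ w α)
    (c : (Fin d → ℕ) → ℝ) (hc : memH w c)
    (ξ : Fin d → ℝ) (hξ : ∀ j, ξ j ∈ Set.Ioo (0:ℝ) 1) (i : Fin d) :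
    Tendsto
      (fun t : ℝ =>
        normH w (t⁻¹ • (Sscale (Function.update ξ i (ξ i + t)) c - Sscale ξ c) - Dscale i ξ c))
      (𝓝[{t : ℝ | t ≠ 0 ∧ ∀ j, Function.update ξ i (ξ i + t) j ∈ Set.Ioo (0:ℝ) 1}] 0)
      (𝓝 0) := by
  have habs : ∀ j, |ξ j| = ξ j := fun j => abs_of_pos (hξ j).1
  have hδ : 0 < (1 - ξ i) / 2 := by linarith [(hξ i).2]
  obtain ⟨K, hK⟩ := bddAbove_range_choose_two_mul_pow (ρ := ξ i + (1 - ξ i) / 2)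
    (abs_lt.mpr ⟨by linarith [(hξ i).1], by linarith⟩)
  have hK0 : 0 ≤ K := by simpa using hK ⟨0, rfl⟩
  have hlim : Tendsto (fun t : ℝ => K * |t| * normH w c) (𝓝 0) (𝓝 0) := by
    simpa using ((continuous_abs.tendsto 0).const_mul K).mul_const (normH w c)
  refine squeeze_zero' (Eventually.of_forall fun _ => Real.sqrt_nonneg _) ?_
    (hlim.mono_left nhdsWithin_le_nhds)
  filter_upwards [self_mem_nhdsWithin, nhdsWithin_le_nhds (eventually_lt_nhds hδ)]
    with t ⟨ht, hts⟩ htδ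
  have hξt : 0 < ξ i + t := by simpa using (hts i).1
  refine normH_le_mul_of_abs_le hw hc.2 (by positivity) fun α => ?_
  exact abs_diffQuot_sub_Dscale_apply_le (fun j => (habs j).trans_le (hξ j).2.le) ht
    (by linarith [habs i]) (by rw [abs_of_pos hξt]; linarith) (fun n => hK ⟨n, rfl⟩) c α

/-- Lemma B.2, equation (7): norm differentiability of the scaling map. For `c ∈ H`,
`ξ ∈ (0,1)^d` and a coordinate `i`,
`‖(S_{ξ + t·e_i} c − S_ξ c)/t − D_i(ξ)c‖ → 0` as `t → 0`, where `t` ranges over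
nonzero values with `ξ + t·e_i ∈ (0,1)^d`. -/
theorem scaling_map_norm_differentiability
    (d : ℕ) (hd : 1 ≤ d)
    (w : (Fin d → ℕ) → ℝ) (hw : ∀ α, 0 ≤ w α)
    (hwsum : Summable fun α : Fin d → ℕ => w α / mfact α ^ 2)
    (c : (Fin d → ℕ) → ℝ) (hc : memH w c)
    (ξ : Fin d → ℝ) (hξ : ∀ j, ξ j ∈ Set.Ioo (0:ℝ) 1) (i : Fin d) :
    Tendsto
      (fun t : ℝ =>
        normH w (t⁻¹ • (Sscale (Function.update ξ i (ξ i + t)) c - Sscale ξ c) - Dscale i ξ c))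
      (𝓝[{t : ℝ | t ≠ 0 ∧ ∀ j, Function.update ξ i (ξ i + t) j ∈ Set.Ioo (0:ℝ) 1}] 0)
      (𝓝 0) :=
  scaling_map_norm_differentiability_general d w hw c hc ξ hξ i
end
end
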